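/- Let Π be a ground head-cycle-free disjunctive logic program and let S ⊆ Lit(Π) be a consistent set of literals. Then S is an answer set of Π if and only if: (1) S satisfies every rule of Π, and (2) there exists a function φ : Lit(Π) → ℕ such that for every literal l ∈ S there is a rule r ∈ Π with (a) pbody(r) ⊆ S, (b) nbody(r) ∩ S = ∅, (c) l ∈ head(r), (d) S ∩ (head(r) \ {l}) = ∅, and (e) φ(l') < φ(l) for every l' ∈ pbody(r). -/

import Mathlib

open scoped Classical

namespace ASP

universe u v

/-- A ground literal: an atom together with a sign
(`true` for the atom itself, `false` for its strong negation `¬a`).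
The atom `|l|` of a literal `l` is its first component `l.1`. -/
abbrev Lit (α : Type u) : Type u := α × Bool

/-- A ground disjunctive rule, consisting of three finite sets of literals:
head, positive body and negative body. -/
structure Rule (α : Type u) : Type u where
  head : Finset (Lit α)
  pbody : Finset (Lit α)
  nbody : Finset (Lit α)
deriving DecidableEq

variable {α : Type u}

/-- A set of literals is consistent if it contains no atom together with
its strong negation. -/
def Consistent (S : Set (Lit α)) : Prop :=
  ∀ a : α, ¬((a, true) ∈ S ∧ (a, false) ∈ S)

/-- `S` satisfies a rule `r`: the head intersects `S` whenever
`pbody(r) ⊆ S` and `nbody(r) ∩ S = ∅`. -/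
def SatRule (S : Set (Lit α)) (r : Rule α) : Prop :=
  ((∀ l ∈ r.pbody, l ∈ S) ∧ (∀ l ∈ r.nbody, l ∉ S)) → ∃ l ∈ r.head, l ∈ S

/-- Answer sets of a positive program: `⊆`-minimal consistent sets of
literals satisfying all rules. -/
def IsAnswerSetPos (P : Set (Rule α)) (S : Set (Lit α)) : Prop :=
  Consistent S ∧ (∀ r ∈ P, SatRule S r) ∧
    ∀ T : Set (Lit α), Consistent T → (∀ r ∈ P, SatRule T r) → T ⊆ S → T = S

/-- The reduct `P^S` of a program w.r.t. a set of literals `S`. -/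
def reduct (P : Set (Rule α)) (S : Set (Lit α)) : Set (Rule α) :=
  {x | ∃ r ∈ P, (∀ l ∈ r.nbody, l ∉ S) ∧ x = ⟨r.head, r.pbody, ∅⟩}

/-- `S` is an answer set of `P` iff `S` is an answer set of the positive
program `P^S`. -/
def IsAnswerSet (P : Set (Rule α)) (S : Set (Lit α)) : Prop :=
  IsAnswerSetPos (reduct P S) S

/-- `Lit(P)`: the literals occurring in a program. -/
def litsOf (P : Set (Rule α)) : Set (Lit α) :=
  {l | ∃ r ∈ P, l ∈ r.head ∨ l ∈ r.pbody ∨ l ∈ r.nbody}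

/-- Edges of the positive dependency graph: from each head literal of a
rule to each of its positive body literals. -/
def DepEdge (P : Set (Rule α)) (l l' : Lit α) : Prop :=
  ∃ r ∈ P, l ∈ r.head ∧ l' ∈ r.pbody

/-- Head-cycle freeness: no two distinct literals occurring together in
some rule head lie on a common cycle of the positive dependency graph. -/
def HeadCycleFree (P : Set (Rule α)) : Prop :=
  ∀ r ∈ P, ∀ l ∈ r.head, ∀ l' ∈ r.head, l ≠ l' →
    ¬(Relation.ReflTransGen (DepEdge P) l l' ∧ Relation.ReflTransGen (DepEdge P) l' l)

/-- `P ∪ S`: the program `P` extended with the literals of `S` as facts. -/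
def withFacts (P : Set (Rule α)) (S : Set (Lit α)) : Set (Rule α) :=
  P ∪ {x | ∃ l ∈ S, x = ⟨{l}, ∅, ∅⟩}

/-! An answer set `S` must be derivable from the bottom up: every literal `l` of `S` has a rule
whose body holds in `S`, whose positive body was derived earlier, and whose only head literal in
`S` is `l`. Such a derivation forces minimality, by induction on the level. Conversely, derive
the literals of an answer set `S` in stages. If some literals of `S` are never derived, they
contain a nonempty set `C` that is closed and strongly connected under "`l` has a supporting
rule with the underived positive body literal `m`". By minimality `S \ C` violates some rule of
the reduct; that rule has a head literal in `S`, hence in `C`, and by head-cycle freeness only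
one. Its positive body lies in `S \ C`, hence is derived, since an underived one would lie in
`C`; so its head literal is derived as well, which contradicts its lying in `C`. -/

end ASP

section ClosedComponent

variable {β : Type*} (R : β → β → Prop)

theorem exists_closed_stronglyConnected_subset {U : Set β} (hU : U.Finite) (hne : U.Nonempty)
    (hcl : ∀ a ∈ U, ∀ b, R a b → b ∈ U) :
    ∃ C ⊆ U, C.Nonempty ∧ (∀ a ∈ C, ∀ b, R a b → b ∈ C) ∧
      ∀ a ∈ C, ∀ b ∈ C, Relation.ReflTransGen R a b := by
  -- A minimal nonempty closed subset works: the part reachable from any of its points is closed.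
  let Closed (C : Set β) : Prop := C.Nonempty ∧ ∀ a ∈ C, ∀ b, R a b → b ∈ C
  obtain ⟨C, ⟨hCU, hCne, hCcl⟩, hCmin⟩ :=
    (hU.finite_subsets.subset fun C (hC : C ⊆ U ∧ Closed C) => hC.1).exists_minimal
      (⟨U, subset_rfl, hne, hcl⟩ : ∃ C, C ⊆ U ∧ Closed C)
  refine ⟨C, hCU, hCne, hCcl, fun a ha b hb => ?_⟩
  let reach : Set β := {b | b ∈ C ∧ Relation.ReflTransGen R a b}
  have hreach : reach ⊆ C := fun _ hb => hb.1
  have hreach_closed : Closed reach :=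
    ⟨⟨a, ha, .refl⟩, fun b hb c hbc => ⟨hCcl b hb.1 c hbc, hb.2.tail hbc⟩⟩
  exact (hCmin ⟨hreach.trans hCU, hreach_closed⟩ hreach hb).2

end ClosedComponent

namespace ASP

variable {α : Type u} {P : Set (Rule α)} {S T : Set (Lit α)}

theorem Consistent.mono (h : Consistent S) (hTS : T ⊆ S) : Consistent T :=
  fun a ha => h a ⟨hTS ha.1, hTS ha.2⟩

theorem litsOf_finite (hfin : P.Finite) : (litsOf P).Finite := by
  refine (hfin.biUnion fun r _ => (r.head.finite_toSet.union r.pbody.finite_toSet).union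
    r.nbody.finite_toSet).subset ?_
  rintro l ⟨r, hr, h⟩
  exact Set.mem_biUnion hr (by simpa [or_assoc] using h)

theorem forall_satRule_reduct_iff :
    (∀ r ∈ reduct P S, SatRule S r) ↔ ∀ r ∈ P, SatRule S r := by
  constructor
  · intro h r hr hb
    exact h ⟨r.head, r.pbody, ∅⟩ ⟨r, hr, hb.2, rfl⟩ ⟨hb.1, by simp⟩
  · rintro h _ ⟨r, hr, hnb, rfl⟩ ⟨hpb, -⟩
    exact h r hr ⟨hpb, hnb⟩

theorem IsAnswerSet.satRule (hS : IsAnswerSet P S) : ∀ r ∈ P, SatRule S r :=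
  forall_satRule_reduct_iff.1 hS.2.1

theorem IsAnswerSet.exists_violated_rule (hS : IsAnswerSet P S) (hTS : T ⊆ S) (hne : T ≠ S) :
    ∃ r ∈ P, (∀ l ∈ r.nbody, l ∉ S) ∧ (∀ l ∈ r.pbody, l ∈ T) ∧
      ∀ l ∈ r.head, l ∉ T := by
  by_contra! h
  refine hne (hS.2.2 T (Consistent.mono hS.1 hTS) ?_ hTS)
  rintro _ ⟨r, hr, hnb, rfl⟩ ⟨hpb, -⟩
  exact h r hr hnb hpb

def Rule.Supports (r : Rule α) (S D : Set (Lit α)) (l : Lit α) : Prop :=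
  (∀ l' ∈ r.pbody, l' ∈ D) ∧ (∀ l' ∈ r.nbody, l' ∉ S) ∧ l ∈ r.head ∧
    ∀ l' ∈ r.head, l' ≠ l → l' ∉ S

def IsLevelMapping (P : Set (Rule α)) (S : Set (Lit α)) (φ : Lit α → ℕ) : Prop :=
  ∀ l ∈ S, ∃ r ∈ P,
    (∀ l' ∈ r.pbody, l' ∈ S) ∧
    (∀ l' ∈ r.nbody, l' ∉ S) ∧
    l ∈ r.head ∧
    (∀ l' ∈ r.head, l' ≠ l → l' ∉ S) ∧
    (∀ l' ∈ r.pbody, φ l' < φ l)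

theorem IsLevelMapping.subset {φ : Lit α → ℕ} (hφ : IsLevelMapping P S φ)
    (hT : ∀ r ∈ reduct P S, SatRule T r) (hTS : T ⊆ S) : S ⊆ T := by
  intro l
  induction l using (measure φ).wf.induction with
  | _ l ih =>
    intro hl
    obtain ⟨r, hr, hpb, hnb, hhd, honly, hdec⟩ := hφ l hl
    obtain ⟨l', hl', hl'T⟩ := hT _ ⟨r, hr, hnb, rfl⟩
      ⟨fun l' h => ih l' (hdec l' h) (hpb l' h), by simp⟩
    by_cases hl'l : l' = l
    · exact hl'l ▸ hl'T
    · exact absurd (hTS hl'T) (honly l' hl' hl'l)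

theorem IsLevelMapping.isAnswerSet {φ : Lit α → ℕ} (hφ : IsLevelMapping P S φ)
    (hcons : Consistent S) (hsat : ∀ r ∈ P, SatRule S r) : IsAnswerSet P S :=
  ⟨hcons, forall_satRule_reduct_iff.2 hsat, fun _ _ hT hTS =>
    (hTS.antisymm (hφ.subset hT hTS))⟩

variable (P S) in
def stage : ℕ → Set (Lit α)
  | 0 => ∅
  | n + 1 => stage n ∪ {l | l ∈ S ∧ ∃ r ∈ P, r.Supports S (stage n) l}

variable (P S) in
def derived : Set (Lit α) := ⋃ n, stage P S n

variable (P S) in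
/-- `0` when `l` lies in no stage. -/
noncomputable def rank (l : Lit α) : ℕ := sInf {n | l ∈ stage P S n}

theorem stage_mono : Monotone (stage P S) :=
  monotone_nat_of_le_succ fun _ => Set.subset_union_left

theorem stage_subset : ∀ n, stage P S n ⊆ S
  | 0 => Set.empty_subset S
  | n + 1 => Set.union_subset (stage_subset n) fun _ hl => hl.1

theorem mem_derived_of_supports {l : Lit α} {r : Rule α} (hl : l ∈ S) (hr : r ∈ P)
    (hsupp : r.Supports S (derived P S) l) : l ∈ derived P S := by
  obtain ⟨n, hn⟩ := stage_mono.directed_le.exists_mem_subset_of_finset_subset_biUnion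
    (s := r.pbody) hsupp.1
  exact Set.mem_iUnion.2 ⟨n + 1, Or.inr ⟨hl, r, hr, hn, hsupp.2⟩⟩

theorem isLevelMapping_rank (hS : S ⊆ derived P S) : IsLevelMapping P S (rank P S) := by
  intro l hl
  have hrank : l ∈ stage P S (rank P S l) := Nat.sInf_mem (Set.mem_iUnion.1 (hS hl))
  obtain ⟨n, hn⟩ : ∃ n, rank P S l = n + 1 :=
    Nat.exists_eq_add_one.2 (Nat.pos_of_ne_zero fun h0 => by simp [h0, stage] at hrank)
  rw [hn] at hrank
  rcases hrank with hearly | ⟨-, r, hr, hpb, hnb, hhd, honly⟩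
  · have : rank P S l ≤ n := Nat.sInf_le hearly
    omega
  · refine ⟨r, hr, fun l' h => stage_subset n (hpb l' h), hnb, hhd, honly, fun l' h => ?_⟩
    have : rank P S l' ≤ n := Nat.sInf_le (hpb l' h)
    omega

variable (P S) in
def BlockedBy (l m : Lit α) : Prop :=
  ∃ r ∈ P, r.Supports S S l ∧ m ∈ r.pbody ∧ m ∉ derived P S

theorem blockedBy_le_depEdge : BlockedBy P S ≤ DepEdge P :=
  fun _ _ ⟨r, hr, hsupp, hm, _⟩ => ⟨r, hr, hsupp.2.2.1, hm⟩

theorem IsAnswerSet.subset_derived (hfin : P.Finite) (hhcf : HeadCycleFree P)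
    (hsub : S ⊆ litsOf P) (hS : IsAnswerSet P S) : S ⊆ derived P S := by
  by_contra hnot
  obtain ⟨l₀, hl₀⟩ := Set.nonempty_of_not_subset hnot
  obtain ⟨C, hCU, ⟨c, hc⟩, hCcl, hCconn⟩ := exists_closed_stronglyConnected_subset
    (BlockedBy P S) (((litsOf_finite hfin).subset hsub).sdiff) ⟨l₀, hl₀⟩
    fun _ _ m ⟨r, _, hsupp, hm, hmD⟩ => ⟨hsupp.1 m hm, hmD⟩
  obtain ⟨r, hr, hnb, hpb, hhd⟩ :=
    hS.exists_violated_rule (T := S \ C) Set.sdiff_subset fun h =>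
      (show c ∈ S \ C by rw [h]; exact (hCU hc).1).2 hc
  have hpbS : ∀ l ∈ r.pbody, l ∈ S := fun l h => (hpb l h).1
  obtain ⟨l, hl, hlS⟩ := hS.satRule r hr ⟨hpbS, hnb⟩
  have hheadC : ∀ l' ∈ r.head, l' ∈ S → l' ∈ C := fun l' h hS' => by
    by_contra hC
    exact hhd l' h ⟨hS', hC⟩
  have hlC := hheadC l hl hlS
  have honly : ∀ l' ∈ r.head, l' ≠ l → l' ∉ S := fun l' hl' hne hl'S => by
    have hl'C := hheadC l' hl' hl'S
    have hdep := Relation.ReflTransGen.mono (blockedBy_le_depEdge (P := P) (S := S))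
    exact hhcf r hr l' hl' l hl hne
      ⟨hdep _ _ (hCconn l' hl'C l hlC), hdep _ _ (hCconn l hlC l' hl'C)⟩
  obtain ⟨m, hm, hmD⟩ : ∃ m ∈ r.pbody, m ∉ derived P S := by
    by_contra! hall
    exact (hCU hlC).2 (mem_derived_of_supports hlS hr ⟨hall, hnb, hl, honly⟩)
  exact (hpb m hm).2 (hCcl l hlC m ⟨r, hr, ⟨hpbS, hnb, hl, honly⟩, hm, hmD⟩)

/-- Ben-Eliyahu–Dechter characterization of the answer sets of a ground
head-cycle-free disjunctive logic program. -/
theorem statement0 {α : Type u} (P : Set (Rule α)) (hfin : P.Finite)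
    (hhcf : HeadCycleFree P) (S : Set (Lit α)) (hsub : S ⊆ litsOf P)
    (hcons : Consistent S) :
    IsAnswerSet P S ↔
      ((∀ r ∈ P, SatRule S r) ∧
        ∃ φ : Lit α → ℕ, ∀ l ∈ S, ∃ r ∈ P,
          (∀ l' ∈ r.pbody, l' ∈ S) ∧
          (∀ l' ∈ r.nbody, l' ∉ S) ∧
          l ∈ r.head ∧
          (∀ l' ∈ r.head, l' ≠ l → l' ∉ S) ∧
          (∀ l' ∈ r.pbody, φ l' < φ l)) :=
  ⟨fun hS => ⟨hS.satRule, rank P S, isLevelMapping_rank (hS.subset_derived hfin hhcf hsub)⟩,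
    fun ⟨hsat, _, hφ⟩ => IsLevelMapping.isAnswerSet hφ hcons hsat⟩

end ASP
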